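/- For the codifferential d₂ = ψ_f^{ff} on a 1|1-dimensional space, the Hochschild cohomology is H⁰(d₂) = ⟨φ_e, φ_f⟩ (dimension 2) and Hⁿ(d₂) = ⟨φ_e^{eⁿ}⟩ (dimension 1) for all n ≥ 1, where φ_e^{eⁿ} is the cochain sending e⊗…⊗e (n times) to e and all other basis tensors to 0. -/

import Mathlib

/-! Framework: the `1|1`-dimensional complex graded vector space `W = ⟨e,f⟩`
(`false` denotes the even basis element `e`, `true` the odd basis element `f`),
Hochschild cochains in coefficient form, and the Hochschild coboundary
`D(φ) = [d,φ]` given by the graded commutator of coderivations on `T(W)`. -/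

/-- A degree-`n` multi-index of basis elements of `W`. -/
abbrev Idx (n : ℕ) := Fin n → Bool

/-- A degree-`n` Hochschild cochain `Cⁿ(W) = Hom(W^⊗n, W)`, recorded by its
coefficients: `φ J i` is the coefficient of `w_i` in `φ(w_J)`. -/
abbrev Cochain (n : ℕ) := Idx n → Bool → ℂ

/-- Parity (0 or 1) of a basis element: `e = false` is even, `f = true` is odd. -/
def pb (b : Bool) : ℕ := if b then 1 else 0

/-- Total parity count of a multi-index. -/
def pc {n : ℕ} (J : Idx n) : ℕ := ∑ i, pb (J i)

/-- Parity count of the length-`t` prefix of a multi-index. -/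
def pcP {n : ℕ} (J : Idx n) (t : ℕ) : ℕ :=
  ∑ i ∈ Finset.univ.filter (fun i : Fin n => i.val < t), pb (J i)

/-- The sign `(−1)^m`. -/
noncomputable def msign (m : ℕ) : ℂ := (-1) ^ m

/-- Replace the adjacent pair of entries at positions `k, k+1` of `J` by the single entry `j`. -/
def repl {n : ℕ} (J : Idx (n + 1)) (k : Fin n) (j : Bool) : Idx n :=
  fun i => if i.val < k.val then J i.castSucc else if i.val = k.val then j else J i.succ

/-- The coderivation `ψ_i^{ab} ∈ Hom(W⊗W, W)` sending `w_a ⊗ w_b` to `w_i`,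
in coefficient form: `delta2 a b i x y j` is the coefficient of `w_j` in `ψ_i^{ab}(w_x ⊗ w_y)`. -/
noncomputable def delta2 (a b i : Bool) : Bool → Bool → Bool → ℂ :=
  fun x y j => if x = a ∧ y = b ∧ j = i then 1 else 0

/-- The Hochschild coboundary `D(φ) = [d, φ] = d∘φ − (−1)^{|φ|} φ∘d` of a cochain
`φ ∈ Cⁿ(W)` with respect to an odd quadratic codifferential `d`, with the usual
Koszul signs for insertions of coderivations. -/
noncomputable def Dmap (d : Bool → Bool → Bool → ℂ) {n : ℕ} (φ : Cochain n) :
    Cochain (n + 1) := fun J i =>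
  (∑ j : Bool, φ (fun k => J k.castSucc) j * d j (J (Fin.last n)) i)
    + (∑ j : Bool, msign ((pc (fun k : Fin n => J k.succ) + pb j) * pb (J 0)) *
        (φ (fun k => J k.succ) j * d (J 0) j i))
    - ∑ k : Fin n, ∑ j : Bool,
        msign (pc (repl J k j) + pb i + pcP J k.val) *
          (φ (repl J k j) i * d (J k.castSucc) (J k.succ) j)

/-- The Hochschild coboundary as a linear map `Cⁿ(W) →ₗ Cⁿ⁺¹(W)`. -/
noncomputable def Dlin (d : Bool → Bool → Bool → ℂ) (n : ℕ) :
    Cochain n →ₗ[ℂ] Cochain (n + 1) where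
  toFun := Dmap d
  map_add' φ ψ := by
    funext J i
    simp only [Dmap, Pi.add_apply, mul_add, add_mul, Finset.sum_add_distrib]
    ring
  map_smul' c φ := by
    funext J i
    simp only [Dmap, Pi.smul_apply, smul_eq_mul, RingHom.id_apply, mul_add, mul_sub,
      Finset.mul_sum, mul_assoc, mul_left_comm]

/-- Hochschild cocycles: `ker (D : Cⁿ → Cⁿ⁺¹)`. -/
noncomputable def Zsp (d : Bool → Bool → Bool → ℂ) (n : ℕ) : Submodule ℂ (Cochain n) :=
  LinearMap.ker (Dlin d n)

/-- Hochschild coboundaries: `im (D : Cⁿ⁻¹ → Cⁿ)` (there are none in degree `0`). -/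
noncomputable def Bsp (d : Bool → Bool → Bool → ℂ) : (n : ℕ) → Submodule ℂ (Cochain n)
  | 0 => ⊥
  | (n + 1) => LinearMap.range (Dlin d n)

/-- The Hochschild cohomology `Hⁿ(d) = ker D / im D`. -/
abbrev Hsp (d : Bool → Bool → Bool → ℂ) (n : ℕ) :=
  (Zsp d n) ⧸ (Submodule.comap (Zsp d n).subtype (Bsp d n))

/-- The basis cochain `φ^I_i`, sending `w_I` to `w_i` and other basis tensors to `0`. -/
noncomputable def bC {n : ℕ} (I : Idx n) (i : Bool) : Cochain n :=
  fun J j => if J = I ∧ j = i then 1 else 0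

/-- `φ_e^{eⁿ}`: the cochain sending `e^⊗n` to `e` and all other basis tensors to `0`. -/
noncomputable def phiE (n : ℕ) : Cochain n := bC (fun _ => false) false

/-- `φ_f^{eⁿ}`: the cochain sending `e^⊗n` to `f` and all other basis tensors to `0`. -/
noncomputable def phiF (n : ℕ) : Cochain n := bC (fun _ => false) true

/-- `d₁ = ψ_e^{ef} − ψ_e^{fe} + ψ_f^{ee} − ψ_f^{ff}`. -/
noncomputable def dd1 : Bool → Bool → Bool → ℂ :=
  fun a b i => delta2 false true false a b i - delta2 true false false a b i
    + delta2 false false true a b i - delta2 true true true a b i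

/-- `d₂ = ψ_f^{ff}`. -/
noncomputable def dd2 : Bool → Bool → Bool → ℂ := delta2 true true true

/-- `d₃ = ψ_e^{ef} − ψ_f^{ff}`. -/
noncomputable def dd3 : Bool → Bool → Bool → ℂ :=
  fun a b i => delta2 false true false a b i - delta2 true true true a b i

/-- `d₄ = ψ_e^{fe} + ψ_f^{ff}`. -/
noncomputable def dd4 : Bool → Bool → Bool → ℂ :=
  fun a b i => delta2 true false false a b i + delta2 true true true a b i

/-- `d₅ = ψ_e^{ef} − ψ_e^{fe} − ψ_f^{ff}`. -/
noncomputable def dd5 : Bool → Bool → Bool → ℂ :=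
  fun a b i => delta2 false true false a b i - delta2 true false false a b i
    - delta2 true true true a b i

/-- `d₆ = ψ_f^{ee}`. -/
noncomputable def dd6 : Bool → Bool → Bool → ℂ := delta2 false false true

/-! The map `contraction`, `h : Cⁿ → Cⁿ⁻¹` for `n ≥ 1`, is a contracting homotopy for `D` up to
one class: `D ∘ h + h ∘ D = id − ev`, where `ev φ` is the `e`-coefficient of `φ(eⁿ)` times
`φ_e^{eⁿ}`. On the output `f`, `h` puts one more `f` in front of the input, which `d₂` absorbs
again; on the output `e`, `h` doubles the first `f` of the input, which `d₂` merges back, and it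
vanishes on `eⁿ⁻¹`. Hence every cocycle of degree `n ≥ 1` is cohomologous to a multiple of
`φ_e^{eⁿ}`, which is no coboundary because no term of `D` has output `e` on the input `eⁿ`.
In degree `0`, `D = 0`. -/

theorem rank_quotient_comap_subtype_eq_one {K V : Type*} [Field K] [AddCommGroup V] [Module K V]
    {Z B : Submodule K V} {x : V} (hxZ : x ∈ Z) (hxB : x ∉ B)
    (hspan : ∀ z ∈ Z, ∃ a : K, z - a • x ∈ B) :
    Module.rank K (Z ⧸ B.comap Z.subtype) = 1 := by
  refine rank_eq_one_iff.mpr ⟨Submodule.Quotient.mk ⟨x, hxZ⟩, ?_, fun v => ?_⟩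
  · rwa [ne_eq, Submodule.Quotient.mk_eq_zero, Submodule.mem_comap]
  · obtain ⟨⟨z, hz⟩, rfl⟩ := Submodule.Quotient.mk_surjective _ v
    obtain ⟨a, ha⟩ := hspan z hz
    refine ⟨a, ?_⟩
    rw [← Submodule.Quotient.mk_smul, Submodule.Quotient.eq, Submodule.mem_comap]
    simpa using B.neg_mem ha

lemma msign_add (a b : ℕ) : msign (a + b) = msign a * msign b := pow_add _ _ _

lemma msign_of_odd {a : ℕ} (h : a % 2 = 1) : msign a = -1 :=
  (Nat.odd_iff.mpr h).neg_one_pow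

lemma msign_of_even {a : ℕ} (h : a % 2 = 0) : msign a = 1 :=
  (Nat.even_iff.mpr h).neg_one_pow

lemma msign_eq_neg_of_odd_add {a b : ℕ} (h : (a + b) % 2 = 1) : msign b = -msign a := by
  rcases Nat.mod_two_eq_zero_or_one a with ha | ha
  · rw [msign_of_even ha, msign_of_odd (by omega)]
  · rw [msign_of_odd ha, msign_of_even (by omega), neg_neg]

lemma ite_msign_add_cancel {c : Prop} [Decidable c] {a b : ℕ} (h : c → (a + b) % 2 = 1)
    (x : ℂ) : (if c then msign a * x else 0) + (if c then msign b * x else 0) = 0 := by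
  split_ifs with hc
  · rw [msign_eq_neg_of_odd_add (h hc)]; ring
  · ring

lemma sum_ite_msign_add_cancel {ι : Type*} [Fintype ι] {c : ι → Prop} [DecidablePred c]
    {a b : ι → ℕ} (h : ∀ i, c i → (a i + b i) % 2 = 1) (x : ι → ℂ) :
    ∑ i, (if c i then msign (a i) * x i else 0) + ∑ i, (if c i then msign (b i) * x i else 0)
      = 0 := by
  rw [← Finset.sum_add_distrib]
  exact Finset.sum_eq_zero fun i _ => ite_msign_add_cancel (h i) (x i)

@[simp] lemma pb_true : pb true = 1 := rfl

@[simp] lemma pb_false : pb false = 0 := rfl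

lemma pc_cons {n : ℕ} (b : Bool) (J : Idx n) : pc (Fin.cons b J) = pb b + pc J := by
  simp [pc, Fin.sum_univ_succ]

lemma pc_eq_pc_init_add_one {n : ℕ} (J : Idx (n + 1)) (h : J (Fin.last n) = true) :
    pc J = pc (fun k : Fin n => J k.castSucc) + 1 := by
  simp [pc, Fin.sum_univ_castSucc, h]

lemma pcP_zero {n : ℕ} (J : Idx n) : pcP J 0 = 0 := by
  simp [pcP]

lemma pcP_cons {n : ℕ} (b : Bool) (J : Idx n) (t : ℕ) :
    pcP (Fin.cons b J) (t + 1) = pb b + pcP J t := by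
  simp [pcP, Finset.sum_filter, Fin.sum_univ_succ]

lemma pcP_eq_zero_of_forall_lt {n : ℕ} (J : Idx n) (t : ℕ)
    (h : ∀ i : Fin n, i.val < t → J i = false) : pcP J t = 0 :=
  Finset.sum_eq_zero fun i hi => by simp [h i (Finset.mem_filter.mp hi).2]

lemma pc_repl {n : ℕ} (J : Idx (n + 1)) (k : Fin n) (h : J k.castSucc = true)
    (h' : J k.succ = true) : pc J = pc (repl J k true) + 1 := by
  have : repl J k true = fun i => J (k.castSucc.succAbove i) := by
    funext i
    simp only [repl, Fin.succAbove, Fin.lt_def, Fin.val_castSucc]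
    split_ifs <;> first | rfl | omega | rw [show i = k from Fin.ext (by omega), h']
  rw [pc, Fin.sum_univ_succAbove _ k.castSucc, this, h, pc]
  simp [add_comm]

lemma repl_cons_succ {n : ℕ} (J : Idx (n + 1)) (k : Fin n) (j : Bool) :
    repl (Fin.cons true J) k.succ j = Fin.cons true (repl J k j) := by
  funext i
  cases i using Fin.cases <;> simp [repl]

lemma repl_cons_zero {n : ℕ} (J : Idx (n + 1)) (h : J 0 = true) :
    repl (Fin.cons true J) 0 true = J := by
  funext i
  cases i using Fin.cases <;> simp [repl, h]

def insertF {n : ℕ} (J : Idx n) (p : Fin n) : Idx (n + 1) :=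
  Fin.insertNth p.castSucc true J

lemma insertF_apply {n : ℕ} (J : Idx n) (p : Fin n) (i : Fin (n + 1)) :
    insertF J p i = if h : i.val < p.val then J ⟨i, by omega⟩
      else if i.val = p.val then true else J ⟨i.val - 1, by omega⟩ := by
  rcases lt_trichotomy i.val p.val with h | h | h
  · obtain ⟨i, rfl⟩ : ∃ i' : Fin n, i = i'.castSucc := ⟨⟨i, by omega⟩, rfl⟩
    rw [dif_pos h, insertF]
    conv_lhs => rw [← Fin.succAbove_castSucc_of_lt p i h]
    exact Fin.insertNth_apply_succAbove _ _ _ _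
  · rw [dif_neg (by omega), if_pos h, insertF, show i = p.castSucc from Fin.ext h,
      Fin.insertNth_apply_same]
  · obtain ⟨i, rfl⟩ : ∃ i' : Fin n, i = i'.succ := ⟨⟨i - 1, by omega⟩, Fin.ext (by simp; omega)⟩
    simp only [Fin.val_succ] at h
    rw [dif_neg (by simp only [Fin.val_succ]; omega), if_neg (by simp only [Fin.val_succ]; omega),
      insertF]
    conv_lhs => rw [← Fin.succAbove_castSucc_of_le p i (Fin.le_def.mpr (by omega))]
    rw [Fin.insertNth_apply_succAbove]
    simp

lemma insertF_castSucc_self {n : ℕ} (J : Idx n) (p : Fin n) : insertF J p p.castSucc = true :=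
  Fin.insertNth_apply_same _ _ _

lemma insertF_castSucc_of_lt {n : ℕ} (J : Idx n) (p : Fin n) {i : Fin n} (h : i < p) :
    insertF J p i.castSucc = J i := by
  rw [insertF, ← Fin.succAbove_castSucc_of_lt p i h, Fin.insertNth_apply_succAbove]

lemma insertF_succ_of_le {n : ℕ} (J : Idx n) (p : Fin n) {i : Fin n} (h : p ≤ i) :
    insertF J p i.succ = J i := by
  rw [insertF, ← Fin.succAbove_castSucc_of_le p i h, Fin.insertNth_apply_succAbove]

lemma pc_insertF {n : ℕ} (J : Idx n) (p : Fin n) : pc (insertF J p) = pc J + 1 := by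
  rw [pc, Fin.sum_univ_succAbove _ p.castSucc]
  simp [insertF, pc, add_comm]

lemma pcP_insertF {n : ℕ} (J : Idx n) (p : Fin n) (t : ℕ) (hle : p.val ≤ t) :
    pcP (insertF J p) (t + 1) = pcP J t + 1 := by
  rw [pcP, Finset.sum_filter, Fin.sum_univ_succAbove _ p.castSucc, pcP, Finset.sum_filter]
  simp only [insertF, Fin.insertNth_apply_same, Fin.insertNth_apply_succAbove, Fin.val_castSucc]
  rw [if_pos (by omega), add_comm]
  congr 1
  refine Finset.sum_congr rfl fun i _ => ?_
  rcases lt_or_ge i.val p.val with h | h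
  · rw [Fin.succAbove_castSucc_of_lt p i h, Fin.val_castSucc]
    split_ifs <;> first | rfl | omega
  · rw [Fin.succAbove_castSucc_of_le p i h, Fin.val_succ]
    split_ifs <;> first | rfl | omega

lemma repl_insertF_self {n : ℕ} (J : Idx n) (p : Fin n) (h : J p = true) :
    repl (insertF J p) p true = J := by
  funext i
  simp only [repl, insertF_apply, Fin.val_succ, Fin.val_castSucc]
  split_ifs <;> first | rfl | omega | rw [show i = p from Fin.ext ‹_›, h]

lemma repl_insertF_comm {n : ℕ} (J : Idx (n + 1)) (p : Fin (n + 1)) (k q : Fin n)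
    (hq : q.val = p.val) (hle : p.val ≤ k.val) :
    repl (insertF J p) k.succ true = insertF (repl J k true) q := by
  funext i
  simp only [repl, insertF_apply, Fin.val_succ, Fin.val_castSucc]
  split_ifs <;> first | rfl | omega | (congr 1; ext; simp; omega)

lemma find?_repl {n : ℕ} {J : Idx (n + 1)} {p : Fin (n + 1)} (hp : Fin.find? J = some p)
    (k : Fin n) (hle : p.val ≤ k.val) :
    Fin.find? (repl J k true) = some ⟨p.val, by omega⟩ := by
  rw [Fin.find?_eq_some_iff] at hp ⊢
  obtain ⟨hp, hmin⟩ := hp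
  refine ⟨?_, fun j hj => ?_⟩
  · simp only [repl]
    split_ifs <;> first | omega | rfl | (rw [← hp]; congr 1)
  · rw [repl, if_pos (by rw [Fin.lt_def] at hj; simp at hj; omega)]
    exact hmin _ (by rw [Fin.lt_def] at hj ⊢; simpa using hj)

lemma Dmap_dd2_apply {n : ℕ} (φ : Cochain n) (J : Idx (n + 1)) (i : Bool) :
    Dmap dd2 φ J i =
      (if J (Fin.last n) = true ∧ i = true then φ (fun k => J k.castSucc) true else 0)
      + (if J 0 = true ∧ i = true then
          msign (pc (fun k : Fin n => J k.succ) + 1) * φ (fun k => J k.succ) true else 0)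
      - ∑ k : Fin n, (if J k.castSucc = true ∧ J k.succ = true then
          msign (pc (repl J k true) + pb i + pcP J k.val) * φ (repl J k true) i else 0) := by
  simp only [Dmap, dd2, delta2, Fintype.sum_bool]
  congr 1
  · congr 1
    · split_ifs <;> simp_all
    · split_ifs <;> simp_all [pb]
  · refine Finset.sum_congr rfl fun k _ => ?_
    split_ifs <;> simp_all

lemma Dmap_dd2_const_false {n : ℕ} (ψ : Cochain n) : Dmap dd2 ψ (fun _ => false) false = 0 := by
  simp [Dmap_dd2_apply]

lemma Dlin_dd2_zero : Dlin dd2 0 = 0 := by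
  refine LinearMap.ext fun φ => funext fun J => funext fun i => ?_
  have hJ : (fun k : Fin 0 => J k.castSucc) = fun k => J k.succ := Subsingleton.elim _ _
  simp only [Dlin, LinearMap.coe_mk, AddHom.coe_mk, Dmap_dd2_apply, hJ, Fin.last_zero, pc,
    Finset.univ_eq_empty, Finset.sum_empty, msign_of_odd (a := 0 + 1) rfl]
  split_ifs <;> simp

noncomputable def contraction {m : ℕ} (φ : Cochain (m + 1)) : Cochain m := fun K i =>
  match i, Fin.find? K with
  | true, _ => msign (pc K + 1) * φ (Fin.cons true K) true
  | false, some p => msign (pc K + 1) * φ (insertF K p) false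
  | false, none => 0

lemma contraction_true {m : ℕ} (φ : Cochain (m + 1)) (K : Idx m) :
    contraction φ K true = msign (pc K + 1) * φ (Fin.cons true K) true := rfl

lemma contraction_false_of_find?_eq_some {m : ℕ} (φ : Cochain (m + 1)) {K : Idx m} {p : Fin m}
    (h : Fin.find? K = some p) :
    contraction φ K false = msign (pc K + 1) * φ (insertF K p) false := by
  simp [contraction, h]

lemma contraction_false_of_find?_eq_none {m : ℕ} (φ : Cochain (m + 1)) {K : Idx m}
    (h : Fin.find? K = none) : contraction φ K false = 0 := by
  simp [contraction, h]

lemma contraction_zero {m : ℕ} : contraction (0 : Cochain (m + 1)) = 0 := by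
  funext K i
  unfold contraction
  split <;> simp

lemma Dmap_contraction_add_contraction_Dmap_true {m : ℕ} (φ : Cochain (m + 1))
    (J : Idx (m + 1)) :
    Dmap dd2 (contraction φ) J true + contraction (Dmap dd2 φ) J true = φ J true := by
  have hinit : (fun k : Fin (m + 1) => (Fin.cons true J : Idx (m + 2)) k.castSucc)
      = Fin.cons true (fun k : Fin m => J k.castSucc) := by
    funext k
    cases k using Fin.cases <;> simp
  rw [contraction_true, Dmap_dd2_apply, Dmap_dd2_apply, Fin.sum_univ_succ, hinit]
  simp only [Fin.cons_zero, Fin.cons_succ, ← Fin.succ_last, ← Fin.succ_castSucc, Fin.castSucc_zero,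
    Fin.val_zero, Fin.val_succ, pb_true, true_and, and_true, if_true, pcP_zero, add_zero,
    repl_cons_succ, pc_cons, pcP_cons, contraction_true, mul_ite, mul_zero, mul_sub, mul_add,
    Finset.mul_sum, ← mul_assoc, ← msign_add]
  have hlast := ite_msign_add_cancel (c := J (Fin.last m) = true)
    (a := (pc fun k => J k.castSucc) + 1) (b := pc J + 1)
    (fun h => by rw [pc_eq_pc_init_add_one J h]; omega)
    (φ (Fin.cons true fun k => J k.castSucc) true)
  have hsum := sum_ite_msign_add_cancel
    (c := fun x : Fin m => J x.castSucc = true ∧ J x.succ = true)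
    (a := fun x => pc (repl J x true) + 1 + pcP J x + (pc (repl J x true) + 1))
    (b := fun x => pc J + 1 + (1 + pc (repl J x true) + 1 + (1 + pcP J x)))
    (fun x h => by rw [pc_repl J x h.1 h.2]; omega)
    (fun x => φ (Fin.cons true (repl J x true)) true)
  have hfirst : (if J 0 = true then
        msign ((pc fun k => J k.succ) + 1 + ((pc fun k => J k.succ) + 1))
          * φ (Fin.cons true fun k => J k.succ) true else 0)
      = if J 0 = true then msign (pc J + 1 + (pc (repl (Fin.cons true J) 0 true) + 1))
        * φ (repl (Fin.cons true J) 0 true) true else 0 := by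
    split_ifs with h
    · have hJ : Fin.cons true (fun k : Fin m => J k.succ) = J := by
        rw [← h]; exact Fin.cons_self_tail J
      rw [hJ, repl_cons_zero J h, msign_of_even (by omega), msign_of_even (by omega)]
    · rfl
  have hmid : msign (pc J + 1 + (pc J + 1)) * φ J true = φ J true := by
    rw [msign_of_even (by omega), one_mul]
  linear_combination hlast - hsum + hfirst + hmid

lemma merge_terms_insertF_cancel {m : ℕ} (φ : Cochain (m + 1)) {J : Idx (m + 1)}
    {p : Fin (m + 1)} (hp : Fin.find? J = some p) (x : Fin m) :
    (if J x.castSucc = true ∧ J x.succ = true then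
        msign (pc (repl J x true) + pcP J x) * contraction φ (repl J x true) false else 0)
    + msign (pc J + 1) *
      (if insertF J p (p.succAbove x).castSucc = true ∧ insertF J p (p.succAbove x).succ = true
        then msign (pc (repl (insertF J p) (p.succAbove x) true)
            + pcP (insertF J p) (p.succAbove x))
          * φ (repl (insertF J p) (p.succAbove x) true) false else 0) = 0 := by
  obtain ⟨-, hJlt⟩ := Fin.find?_eq_some_iff.mp hp
  rcases lt_or_ge x.castSucc p with hx | hx
  · rw [Fin.succAbove_of_castSucc_lt _ _ hx, insertF_castSucc_of_lt J p hx, hJlt _ hx]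
    simp
  · have hle : p.val ≤ x.val := hx
    rw [Fin.succAbove_of_le_castSucc _ _ hx, ← Fin.succ_castSucc, insertF_succ_of_le J p hx,
      insertF_succ_of_le J p (Fin.le_def.mpr (by simp; omega)),
      repl_insertF_comm J p x ⟨p, by omega⟩ rfl hle,
      contraction_false_of_find?_eq_some _ (find?_repl hp x hle), pc_insertF, Fin.val_succ,
      pcP_insertF _ _ _ hle, mul_ite, mul_zero, ← mul_assoc, ← mul_assoc, ← msign_add,
      ← msign_add]
    exact ite_msign_add_cancel (fun hc => by rw [pc_repl J x hc.1 hc.2]; omega) _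

lemma Dmap_contraction_add_contraction_Dmap_false {m : ℕ} (φ : Cochain (m + 1))
    {J : Idx (m + 1)} {p : Fin (m + 1)} (hp : Fin.find? J = some p) :
    Dmap dd2 (contraction φ) J false + contraction (Dmap dd2 φ) J false = φ J false := by
  obtain ⟨hpJ, hJlt⟩ := Fin.find?_eq_some_iff.mp hp
  rw [contraction_false_of_find?_eq_some _ hp, Dmap_dd2_apply, Dmap_dd2_apply,
    Fin.sum_univ_succAbove _ p]
  simp only [Bool.false_eq_true, and_false, if_false, pb_false, add_zero, zero_sub]
  have hmerge : (if insertF J p p.castSucc = true ∧ insertF J p p.succ = true then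
        msign (pc (repl (insertF J p) p true) + pcP (insertF J p) p) *
          φ (repl (insertF J p) p true) false else 0) = msign (pc J) * φ J false := by
    have hpcP : pcP (insertF J p) p = 0 := pcP_eq_zero_of_forall_lt _ _ fun i hi => by
      rw [insertF_apply, dif_pos hi]; exact hJlt _ (Fin.lt_def.mpr hi)
    rw [if_pos ⟨insertF_castSucc_self J p, by rw [insertF_succ_of_le J p le_rfl, hpJ]⟩,
      repl_insertF_self J p hpJ, hpcP, add_zero]
  have hsum := Finset.sum_eq_zero (s := Finset.univ) fun x _ => merge_terms_insertF_cancel φ hp x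
  rw [Finset.sum_add_distrib, ← Finset.mul_sum] at hsum
  have hsign : msign (pc J + 1) * msign (pc J) = -1 := by
    rw [← msign_add, msign_of_odd (by omega)]
  linear_combination -hsum - msign (pc J + 1) * hmerge - φ J false * hsign

lemma phiE_apply {n : ℕ} (J : Idx n) (i : Bool) :
    phiE n J i = if J = (fun _ => false) ∧ i = false then 1 else 0 := rfl

lemma Dmap_contraction_add_contraction_Dmap {m : ℕ} (φ : Cochain (m + 1)) :
    Dmap dd2 (contraction φ) + contraction (Dmap dd2 φ)
      = φ - φ (fun _ => false) false • phiE (m + 1) := by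
  funext J i
  simp only [Pi.add_apply, Pi.sub_apply, Pi.smul_apply, smul_eq_mul, phiE_apply]
  cases i with
  | true => simp [Dmap_contraction_add_contraction_Dmap_true]
  | false =>
    cases hp : Fin.find? J with
    | none =>
      obtain rfl : J = fun _ => false := funext (Fin.find?_eq_none_iff.mp hp)
      simp [Dmap_dd2_const_false, contraction_false_of_find?_eq_none _ hp]
    | some p =>
      have hJ : J ≠ fun _ => false := fun h => by
        simpa [h] using (Fin.find?_eq_some_iff.mp hp).1
      simp [Dmap_contraction_add_contraction_Dmap_false φ hp, hJ]
lemma phiE_mem_Zsp (n : ℕ) : phiE n ∈ Zsp dd2 n := by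
  refine LinearMap.mem_ker.mpr (funext fun J => funext fun i => ?_)
  have hrepl : ∀ k, repl J k true ≠ fun _ => false := fun k h => by
    simpa [repl] using congrFun h k
  simp [Dlin, Dmap_dd2_apply, phiE_apply, hrepl]

lemma phiE_notMem_Bsp (m : ℕ) : phiE (m + 1) ∉ Bsp dd2 (m + 1) := by
  rintro ⟨ψ, hψ⟩
  have := congrFun (congrFun hψ fun _ => false) false
  simp [Dlin, Dmap_dd2_const_false, phiE_apply] at this

lemma sub_smul_phiE_mem_Bsp {m : ℕ} {φ : Cochain (m + 1)} (hφ : φ ∈ Zsp dd2 (m + 1)) :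
    φ - φ (fun _ => false) false • phiE (m + 1) ∈ Bsp dd2 (m + 1) := by
  refine ⟨contraction φ, ?_⟩
  show Dmap dd2 (contraction φ) = _
  have hDφ : Dmap dd2 φ = 0 := LinearMap.mem_ker.mp hφ
  simpa [hDφ, contraction_zero] using Dmap_contraction_add_contraction_Dmap φ

lemma Zsp_dd2_zero : Zsp dd2 0 = ⊤ := by
  rw [Zsp, Dlin_dd2_zero, LinearMap.ker_zero]

lemma span_phiE_phiF_zero : Submodule.span ℂ {phiE 0, phiF 0} = ⊤ := by
  refine eq_top_iff.mpr fun φ _ => Submodule.mem_span_pair.mpr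
    ⟨φ (fun _ => false) false, φ (fun _ => false) true, funext fun J => funext fun i => ?_⟩
  obtain rfl : J = fun _ => false := Subsingleton.elim _ _
  cases i <;> simp [phiE, phiF, bC]

lemma rank_Hsp_dd2_zero : Module.rank ℂ (Hsp dd2 0) = 2 := by
  have hB : Submodule.comap (Zsp dd2 0).subtype (Bsp dd2 0) = ⊥ := by
    rw [Bsp, Submodule.comap_bot, Submodule.ker_subtype]
  rw [(Submodule.quotEquivOfEqBot _ hB).rank_eq,
    ((LinearEquiv.ofEq _ _ Zsp_dd2_zero).trans Submodule.topEquiv).rank_eq,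
    (LinearEquiv.funUnique (Idx 0) ℂ (Bool → ℂ)).rank_eq, rank_fun']
  simp

/-- For `d₂ = ψ_f^{ff}`: `H⁰(d₂) = ⟨φ_e, φ_f⟩` is 2-dimensional, and for `n ≥ 1`,
`Hⁿ(d₂) = ⟨φ_e^{eⁿ}⟩` is 1-dimensional, spanned by the class of the cocycle `φ_e^{eⁿ}`. -/
theorem d2_cohomology :
    (Zsp dd2 0 = Submodule.span ℂ {phiE 0, phiF 0})
      ∧ Module.rank ℂ (Hsp dd2 0) = 2
      ∧ ∀ n : ℕ, 1 ≤ n →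
          phiE n ∈ Zsp dd2 n
            ∧ Module.rank ℂ (Hsp dd2 n) = 1
            ∧ ∀ φ ∈ Zsp dd2 n, ∃ a : ℂ, φ - a • phiE n ∈ Bsp dd2 n := by
  refine ⟨Zsp_dd2_zero.trans span_phiE_phiF_zero.symm, rank_Hsp_dd2_zero, fun n hn => ?_⟩
  obtain ⟨m, rfl⟩ := Nat.exists_eq_add_of_le' hn
  have hspan : ∀ φ ∈ Zsp dd2 (m + 1), ∃ a : ℂ, φ - a • phiE (m + 1) ∈ Bsp dd2 (m + 1) :=
    fun φ hφ => ⟨_, sub_smul_phiE_mem_Bsp hφ⟩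
  exact ⟨phiE_mem_Zsp _,
    rank_quotient_comap_subtype_eq_one (phiE_mem_Zsp _) (phiE_notMem_Bsp m) hspan, hspan⟩
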